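/- Under the previous assumptions, and additionally ‖e‖₂ ≤ ε_b‖b‖₂ with b = Ax, the total noise obeys ‖Ex‖₂ + ‖e‖₂ ≤ ( (ε^{(K)}κ + ε_A·α·r_K)/(1 - κ(r_K + s_K/√K)) + ε_b )·‖b‖₂. -/

import Mathlib

/-!
Split `x = x_K + (x - x_K)`. The sparse part gives
`‖E x‖ ≤ ε^{(K)} √(1+δ) ‖x_K‖ + ε_A ‖A‖ ‖x - x_K‖` and `‖A x‖ ≥ √(1-δ) ‖x_K‖ - ‖A (x - x_K)‖`.
The tail is handled by shelling: sort `x - x_K` by decreasing modulus and cut it into consecutive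
blocks of `K` coordinates; every block after the first has ℓ₂ norm at most the ℓ₁ norm of the
previous block divided by `√K`, so the upper RIP bound yields
`‖A (x - x_K)‖ ≤ √(1+δ) (‖x - x_K‖₂ + ‖x - x_K‖₁ / √K)`. Hence
`‖A x‖ ≥ √(1-δ) (1 - κ (r_K + s_K / √K)) ‖x_K‖`, and dividing the bound on `‖E x‖` by this lower
bound gives the first term, while `‖e‖ ≤ ε_b ‖b‖` gives the second.
-/

open scoped BigOperators

/-- The Euclidean (ℓ₂) norm of a finitely indexed complex vector. -/
noncomputable def l2 {ι : Type*} [Fintype ι] (v : ι → ℂ) : ℝ :=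
  Real.sqrt (∑ i, ‖v i‖ ^ 2)

/-- The ℓ₁ norm of a finitely indexed complex vector. -/
noncomputable def l1 {ι : Type*} [Fintype ι] (v : ι → ℂ) : ℝ :=
  ∑ i, ‖v i‖

/-- A vector is `K`-sparse if it has at most `K` nonzero entries. -/
def Sparse {n : ℕ} (K : ℕ) (x : Fin n → ℂ) : Prop :=
  ∃ s : Finset (Fin n), s.card ≤ K ∧ ∀ i ∉ s, x i = 0

/-- `xK` is a best `K`-term approximation of `x`: it is `K`-sparse, agrees with `x`
on its support, and keeps the largest-magnitude entries. -/
def IsBestKApprox {n : ℕ} (K : ℕ) (x xK : Fin n → ℂ) : Prop :=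
  Sparse K xK ∧ (∀ i, xK i ≠ 0 → xK i = x i) ∧
    (∀ i j, xK i ≠ 0 → xK j = 0 → ‖x j‖ ≤ ‖x i‖)

open Finset Matrix

section Norms

variable {ι : Type*} [Fintype ι]

lemma l2_eq_norm_toLp (v : ι → ℂ) : l2 v = ‖(WithLp.toLp 2 v : EuclideanSpace ℂ ι)‖ := by
  rw [EuclideanSpace.norm_eq]; rfl

lemma l2_nonneg (v : ι → ℂ) : 0 ≤ l2 v :=
  Real.sqrt_nonneg _

lemma l2_pos {v : ι → ℂ} (hv : v ≠ 0) : 0 < l2 v := by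
  rw [l2_eq_norm_toLp, norm_pos_iff]
  exact fun h => hv (congrArg WithLp.ofLp h)

lemma l2_add_le (u v : ι → ℂ) : l2 (u + v) ≤ l2 u + l2 v := by
  simpa only [l2_eq_norm_toLp, WithLp.toLp_add] using norm_add_le _ _

lemma l2_sub_le (u v : ι → ℂ) : l2 (u - v) ≤ l2 u + l2 v := by
  simpa only [l2_eq_norm_toLp, WithLp.toLp_sub] using norm_sub_le _ _

lemma l2_sum_le {β : Type*} (s : Finset β) (f : β → ι → ℂ) :
    l2 (∑ i ∈ s, f i) ≤ ∑ i ∈ s, l2 (f i) := by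
  simpa only [l2_eq_norm_toLp, WithLp.toLp_sum] using norm_sum_le _ _

lemma l2_le_l2_of_norm_le {u v : ι → ℂ} (h : ∀ i, ‖u i‖ ≤ ‖v i‖) : l2 u ≤ l2 v :=
  Real.sqrt_le_sqrt <| sum_le_sum fun i _ => pow_le_pow_left₀ (norm_nonneg _) (h i) 2

end Norms

lemma sum_range_sum_Ico_mul (f : ℕ → ℝ) (K t : ℕ) :
    ∑ i ∈ range t, ∑ k ∈ Ico (i * K) ((i + 1) * K), f k = ∑ k ∈ range (t * K), f k := by
  induction t with
  | zero => simp
  | succ t ih =>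
    rw [sum_range_succ, ih, sum_range_add_sum_Ico _ (Nat.mul_le_mul_right K t.le_succ)]

lemma Antitone.sqrt_sum_sq_Ico_succ_le {a : ℕ → ℝ} (ha : Antitone a) (ha0 : ∀ k, 0 ≤ a k)
    {K : ℕ} (hK : 0 < K) (i : ℕ) :
    √(∑ k ∈ Ico ((i + 1) * K) ((i + 2) * K), a k ^ 2) ≤
      (∑ k ∈ Ico (i * K) ((i + 1) * K), a k) / √K := by
  set S := ∑ k ∈ Ico (i * K) ((i + 1) * K), a k
  have hKR : (0 : ℝ) < K := by exact_mod_cast hK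
  have hterm : ∀ k ∈ Ico ((i + 1) * K) ((i + 2) * K), a k ≤ S / K := by
    intro k hk
    rw [le_div_iff₀ hKR, mul_comm]
    have hcard : #(Ico (i * K) ((i + 1) * K)) = K := by simp [add_mul]
    have := card_nsmul_le_sum (Ico (i * K) ((i + 1) * K)) a (a k) fun l hl =>
      ha ((mem_Ico.1 hl).2.le.trans (mem_Ico.1 hk).1)
    rwa [hcard, nsmul_eq_mul] at this
  have hsq : ∑ k ∈ Ico ((i + 1) * K) ((i + 2) * K), a k ^ 2 ≤ K * (S / K) ^ 2 := by
    have := sum_le_card_nsmul _ (fun k => a k ^ 2) ((S / K) ^ 2) fun k hk =>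
      pow_le_pow_left₀ (ha0 k) (hterm k hk) 2
    simpa [Nat.card_Ico, add_mul, show i * K + 2 * K - (i * K + K) = K by omega] using this
  have hS : 0 ≤ S := sum_nonneg fun k _ => ha0 k
  rw [Real.sqrt_le_left (by positivity), div_pow, Real.sq_sqrt hKR.le]
  calc _ ≤ (K : ℝ) * (S / K) ^ 2 := hsq
    _ = S ^ 2 / K := by field_simp

section Rearrangement

variable {n : ℕ} (v : Fin n → ℂ)

noncomputable def normSort : Equiv.Perm (Fin n) :=
  Tuple.sort fun j => -‖v j‖

noncomputable def decreasingRearrangement (k : ℕ) : ℝ :=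
  if h : k < n then ‖v (normSort v ⟨k, h⟩)‖ else 0

noncomputable def rankBlock (K i : ℕ) : Fin n → ℂ :=
  fun j => if ((normSort v).symm j : ℕ) / K = i then v j else 0

lemma decreasingRearrangement_nonneg (k : ℕ) : 0 ≤ decreasingRearrangement v k := by
  unfold decreasingRearrangement; split_ifs <;> simp

lemma antitone_decreasingRearrangement : Antitone (decreasingRearrangement v) := by
  intro k l hkl
  unfold decreasingRearrangement
  split_ifs with hl hk hk
  · exact neg_le_neg_iff.1 <|
      Tuple.monotone_sort (fun j => -‖v j‖) (show (⟨k, hk⟩ : Fin n) ≤ ⟨l, hl⟩ from hkl)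
  · omega
  · exact norm_nonneg _
  · rfl

lemma sum_eq_sum_range_decreasingRearrangement (F : ℕ → ℝ → ℝ) :
    ∑ j, F ((normSort v).symm j) ‖v j‖ = ∑ k ∈ range n, F k (decreasingRearrangement v k) := by
  rw [← Equiv.sum_comp (normSort v), ← Fin.sum_univ_eq_sum_range]
  simp [decreasingRearrangement]

lemma sum_range_decreasingRearrangement_le_l1 (N : ℕ) :
    ∑ k ∈ range N, decreasingRearrangement v k ≤ l1 v := by
  have hl1 : l1 v = ∑ k ∈ range n, decreasingRearrangement v k :=
    sum_eq_sum_range_decreasingRearrangement v fun _ x => x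
  rw [hl1]
  rcases le_total N n with hN | hN
  · exact sum_le_sum_of_subset_of_nonneg (range_subset_range.2 hN) fun k _ _ =>
      decreasingRearrangement_nonneg v k
  · rw [← sum_range_add_sum_Ico _ hN, add_le_iff_nonpos_right]
    refine (sum_eq_zero fun k hk => ?_).le
    simp [decreasingRearrangement, (mem_Ico.1 hk).1]

lemma sum_rankBlock (K : ℕ) : ∑ i ∈ range (n / K + 1), rankBlock v K i = v := by
  ext j
  simp only [rankBlock, Finset.sum_apply, sum_ite_eq, mem_range, ite_eq_left_iff]
  intro h
  exact absurd (Nat.lt_succ_of_le (Nat.div_le_div_right ((normSort v).symm j).isLt.le)) h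

lemma mem_Ico_of_div_eq {K k i : ℕ} (hK : 0 < K) (h : k / K = i) :
    k ∈ Ico (i * K) ((i + 1) * K) := by
  have := (Nat.div_eq_iff hK).1 h
  rw [mem_Ico, add_mul]
  omega

lemma sparse_rankBlock {K : ℕ} (hK : 0 < K) (i : ℕ) : Sparse K (rankBlock v K i) := by
  refine ⟨({j | ((normSort v).symm j : ℕ) / K = i} : Finset (Fin n)), ?_,
    fun j hj => by simp_all [rankBlock]⟩
  calc _ ≤ #(Ico (i * K) ((i + 1) * K)) :=
        card_le_card_of_injOn (fun j => ((normSort v).symm j : ℕ))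
          (fun j hj => mem_Ico_of_div_eq hK (by simpa using hj))
          fun a _ b _ hab => (normSort v).symm.injective (Fin.val_injective hab)
    _ = K := by simp [add_mul]

lemma l2_rankBlock_le_l2 (K i : ℕ) : l2 (rankBlock v K i) ≤ l2 v :=
  l2_le_l2_of_norm_le fun j => by unfold rankBlock; split_ifs <;> simp

lemma l2_rankBlock_le {K : ℕ} (hK : 0 < K) (i : ℕ) :
    l2 (rankBlock v K i) ≤ √(∑ k ∈ Ico (i * K) ((i + 1) * K), decreasingRearrangement v k ^ 2) := by
  refine Real.sqrt_le_sqrt ?_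
  calc ∑ j, ‖rankBlock v K i j‖ ^ 2
      = ∑ j, if ((normSort v).symm j : ℕ) / K = i then ‖v j‖ ^ 2 else 0 :=
        sum_congr rfl fun j _ => by unfold rankBlock; split_ifs <;> simp
    _ = ∑ k ∈ range n with k / K = i, decreasingRearrangement v k ^ 2 := by
        rw [sum_filter]
        exact sum_eq_sum_range_decreasingRearrangement v fun k x => if k / K = i then x ^ 2 else 0
    _ ≤ _ := sum_le_sum_of_subset_of_nonneg
        (fun k hk => mem_Ico_of_div_eq hK (mem_filter.1 hk).2) fun _ _ _ => sq_nonneg _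

end Rearrangement

lemma sum_l2_rankBlock_succ_le {n K : ℕ} (v : Fin n → ℂ) (hK : 0 < K) (t : ℕ) :
    ∑ i ∈ range t, l2 (rankBlock v K (i + 1)) ≤ l1 v / √K :=
  calc ∑ i ∈ range t, l2 (rankBlock v K (i + 1))
      ≤ ∑ i ∈ range t, √(∑ k ∈ Ico ((i + 1) * K) ((i + 2) * K), decreasingRearrangement v k ^ 2) :=
        sum_le_sum fun i _ => l2_rankBlock_le v hK (i + 1)
    _ ≤ ∑ i ∈ range t, (∑ k ∈ Ico (i * K) ((i + 1) * K), decreasingRearrangement v k) / √K :=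
        sum_le_sum fun i _ => (antitone_decreasingRearrangement v).sqrt_sum_sq_Ico_succ_le
          (decreasingRearrangement_nonneg v) hK i
    _ = (∑ k ∈ range (t * K), decreasingRearrangement v k) / √K := by
        rw [← sum_div, sum_range_sum_Ico_mul]
    _ ≤ l1 v / √K := div_le_div_of_nonneg_right
        (sum_range_decreasingRearrangement_le_l1 v _) (Real.sqrt_nonneg _)

lemma l2_mulVec_le_of_sparse {m n K : ℕ} (hK : 0 < K) {A : Matrix (Fin m) (Fin n) ℂ} {c : ℝ}
    (hc : 0 ≤ c) (hA : ∀ v, Sparse K v → l2 (A *ᵥ v) ≤ c * l2 v) (v : Fin n → ℂ) :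
    l2 (A *ᵥ v) ≤ c * (l2 v + l1 v / √K) :=
  calc l2 (A *ᵥ v) = l2 (∑ i ∈ range (n / K + 1), A *ᵥ rankBlock v K i) := by
        rw [← mulVec_sum, sum_rankBlock]
    _ ≤ ∑ i ∈ range (n / K + 1), c * l2 (rankBlock v K i) :=
        (l2_sum_le _ _).trans <| sum_le_sum fun i _ => hA _ (sparse_rankBlock v hK i)
    _ = c * (∑ i ∈ range (n / K), l2 (rankBlock v K (i + 1)) + l2 (rankBlock v K 0)) := by
        rw [← mul_sum, sum_range_succ']
    _ ≤ c * (l2 v + l1 v / √K) := mul_le_mul_of_nonneg_left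
        (by linarith [sum_l2_rankBlock_succ_le v hK (n / K), l2_rankBlock_le_l2 v K 0]) hc

lemma sub_le_l2_mulVec {m n K : ℕ} (hK : 0 < K) {A : Matrix (Fin m) (Fin n) ℂ} {a c : ℝ}
    (hc : 0 ≤ c) (hlow : ∀ v, Sparse K v → a * l2 v ≤ l2 (A *ᵥ v))
    (hup : ∀ v, Sparse K v → l2 (A *ᵥ v) ≤ c * l2 v) {y : Fin n → ℂ} (hy : Sparse K y)
    (x : Fin n → ℂ) :
    a * l2 y - c * (l2 (x - y) + l1 (x - y) / √K) ≤ l2 (A *ᵥ x) := by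
  have htri : l2 (A *ᵥ y) ≤ l2 (A *ᵥ x) + l2 (A *ᵥ (x - y)) := by
    simpa [mulVec_sub] using l2_sub_le (A *ᵥ x) (A *ᵥ (x - y))
  linarith [hlow y hy, l2_mulVec_le_of_sparse hK hc hup (x - y)]

lemma le_sqrt_mul_of_sq_le_mul {s t c : ℝ} (hs : 0 ≤ s) (ht : 0 ≤ t) (h : s ^ 2 ≤ c * t ^ 2) :
    s ≤ √c * t := by
  rw [← Real.sqrt_sq hs, ← Real.sqrt_sq ht, ← Real.sqrt_mul' _ (sq_nonneg _)]
  exact Real.sqrt_le_sqrt h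

lemma sqrt_mul_le_of_mul_sq_le {s t c : ℝ} (hs : 0 ≤ s) (ht : 0 ≤ t) (h : c * t ^ 2 ≤ s ^ 2) :
    √c * t ≤ s := by
  rw [← Real.sqrt_sq hs, ← Real.sqrt_sq ht, ← Real.sqrt_mul' _ (sq_nonneg _)]
  exact Real.sqrt_le_sqrt h

theorem total_perturbation_bound_general {m n K : ℕ} (hK : 0 < K)
    (A E : Matrix (Fin m) (Fin n) ℂ) (δ εK εA εb nA : ℝ)
    (hδ0 : 0 ≤ δ) (hδ1 : δ < 1) (hεK : 0 ≤ εK) (hεA : 0 ≤ εA)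
    (hnA : 0 ≤ nA)
    (hRIP : ∀ v : Fin n → ℂ, Sparse K v →
      (1 - δ) * l2 v ^ 2 ≤ l2 (A.mulVec v) ^ 2 ∧ l2 (A.mulVec v) ^ 2 ≤ (1 + δ) * l2 v ^ 2)
    (hEK : ∀ v : Fin n → ℂ, Sparse K v → l2 (E.mulVec v) ≤ εK * Real.sqrt (1 + δ) * l2 v)
    (hEop : ∀ v : Fin n → ℂ, l2 (E.mulVec v) ≤ εA * nA * l2 v)
    (x xK : Fin n → ℂ) (hbest : IsBestKApprox K x xK) (hxK : xK ≠ 0)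
    (hcond : l2 (x - xK) / l2 xK + (l1 (x - xK) / l2 xK) / Real.sqrt K
        < 1 / (Real.sqrt (1 + δ) / Real.sqrt (1 - δ)))
    (e : Fin m → ℂ) (he : l2 e ≤ εb * l2 (A.mulVec x)) :
    l2 (E.mulVec x) + l2 e ≤
      ((εK * (Real.sqrt (1 + δ) / Real.sqrt (1 - δ)) +
          εA * (nA / Real.sqrt (1 - δ)) * (l2 (x - xK) / l2 xK)) /
        (1 - (Real.sqrt (1 + δ) / Real.sqrt (1 - δ)) *
          (l2 (x - xK) / l2 xK + (l1 (x - xK) / l2 xK) / Real.sqrt K)) + εb) *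
        l2 (A.mulVec x) := by
  have hL : 0 < l2 xK := l2_pos hxK
  have hsd : 0 < √(1 - δ) := Real.sqrt_pos.2 (by linarith)
  have hsu : 0 < √(1 + δ) := Real.sqrt_pos.2 (by linarith)
  have hAx := sub_le_l2_mulVec hK (Real.sqrt_nonneg _)
    (fun v hv => sqrt_mul_le_of_mul_sq_le (l2_nonneg _) (l2_nonneg _) (hRIP v hv).1)
    (fun v hv => le_sqrt_mul_of_sq_le_mul (l2_nonneg _) (l2_nonneg _) (hRIP v hv).2)
    hbest.1 x
  have hEx : l2 (E *ᵥ x) ≤ εK * √(1 + δ) * l2 xK + εA * nA * l2 (x - xK) := by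
    simpa [← mulVec_add] using (l2_add_le (E *ᵥ xK) (E *ᵥ (x - xK))).trans
      (add_le_add (hEK xK hbest.1) (hEop (x - xK)))
  set r := l2 (x - xK) / l2 xK
  set P := r + l1 (x - xK) / l2 xK / √K
  set κ := √(1 + δ) / √(1 - δ)
  have hD : 0 < 1 - κ * P := sub_pos.2 ((lt_div_iff₀' (by positivity)).1 hcond)
  have hAx' : √(1 - δ) * l2 xK * (1 - κ * P) ≤ l2 (A *ᵥ x) := by
    convert hAx using 1
    simp only [P, r, κ]
    field_simp
  have hcoef : (εK * κ + εA * (nA / √(1 - δ)) * r) / (1 - κ * P) *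
      (√(1 - δ) * l2 xK * (1 - κ * P)) = εK * √(1 + δ) * l2 xK + εA * nA * l2 (x - xK) := by
    rw [mul_comm _ (1 - κ * P), ← mul_assoc, div_mul_cancel₀ _ hD.ne']
    simp only [κ, r]
    field_simp
  have hr : 0 ≤ r := div_nonneg (l2_nonneg _) hL.le
  calc l2 (E *ᵥ x) + l2 e
      ≤ (εK * κ + εA * (nA / √(1 - δ)) * r) / (1 - κ * P) * (√(1 - δ) * l2 xK * (1 - κ * P)) +
          εb * l2 (A *ᵥ x) := by linarith
    _ ≤ _ := by
        rw [add_mul]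
        gcongr

/-- total perturbation bound ‖Ex‖₂ + ‖e‖₂ ≤ ε'_{A,K,b}. -/
theorem total_perturbation_bound {m n K : ℕ} (hK : 0 < K)
    (A E : Matrix (Fin m) (Fin n) ℂ) (δ εK εA εb nA : ℝ)
    (hδ0 : 0 ≤ δ) (hδ1 : δ < 1) (hεK : 0 ≤ εK) (hεA : 0 ≤ εA) (hεb : 0 ≤ εb)
    (hnA : 0 ≤ nA)
    (hRIP : ∀ v : Fin n → ℂ, Sparse K v →
      (1 - δ) * l2 v ^ 2 ≤ l2 (A.mulVec v) ^ 2 ∧ l2 (A.mulVec v) ^ 2 ≤ (1 + δ) * l2 v ^ 2)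
    (hAop : ∀ v : Fin n → ℂ, l2 (A.mulVec v) ≤ nA * l2 v)
    (hEK : ∀ v : Fin n → ℂ, Sparse K v → l2 (E.mulVec v) ≤ εK * Real.sqrt (1 + δ) * l2 v)
    (hEop : ∀ v : Fin n → ℂ, l2 (E.mulVec v) ≤ εA * nA * l2 v)
    (x xK : Fin n → ℂ) (hbest : IsBestKApprox K x xK) (hxK : xK ≠ 0)
    (hcond : l2 (x - xK) / l2 xK + (l1 (x - xK) / l2 xK) / Real.sqrt K
        < 1 / (Real.sqrt (1 + δ) / Real.sqrt (1 - δ)))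
    (e : Fin m → ℂ) (he : l2 e ≤ εb * l2 (A.mulVec x)) :
    l2 (E.mulVec x) + l2 e ≤
      ((εK * (Real.sqrt (1 + δ) / Real.sqrt (1 - δ)) +
          εA * (nA / Real.sqrt (1 - δ)) * (l2 (x - xK) / l2 xK)) /
        (1 - (Real.sqrt (1 + δ) / Real.sqrt (1 - δ)) *
          (l2 (x - xK) / l2 xK + (l1 (x - xK) / l2 xK) / Real.sqrt K)) + εb) *
        l2 (A.mulVec x) :=
  total_perturbation_bound_general hK A E δ εK εA εb nA hδ0 hδ1 hεK hεA hnA hRIP hEK hEop x xK hbest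
    hxK hcond e he
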